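/- Let x solve the variational inequality ⟨A(x), y−x⟩ + φ(y) − φ(x) ≥ ⟨f, y−x⟩ for all y, and let x_ε solve the same inequality with φ replaced by a regularization φ_ε satisfying 0 ≤ φ(y) − φ_ε(y) ≤ cε for all y. If A is strongly monotone with constant C > 0, then ‖x − x_ε‖ ≤ √(2cε/C), i.e. the regularization error is of order √ε. -/
import Mathlib


open RealInnerProductSpace

/-- Regularization error estimate: if `x` solves the variational inequality with `φ` and
`x_ε` solves it with a regularization `φ_ε` satisfying `0 ≤ φ − φ_ε ≤ cε`, and `A` is
strongly monotone with constant `C`, then `‖x − x_ε‖ ≤ √(2cε/C)`. -/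
theorem regularization_error_estimate
    {H : Type*} [NormedAddCommGroup H] [InnerProductSpace ℝ H] [CompleteSpace H]
    (A : H → H) (C : ℝ) (hC : 0 < C)
    (hmono : ∀ u v : H, ⟪A u - A v, u - v⟫ ≥ C * ‖u - v‖ ^ 2)
    (φ φε : H → ℝ) (hφconv : ConvexOn ℝ Set.univ φ) (hφεconv : ConvexOn ℝ Set.univ φε)
    (c ε : ℝ) (hc : 0 ≤ c) (hε : 0 ≤ ε)
    (happrox : ∀ y : H, 0 ≤ φ y - φε y ∧ φ y - φε y ≤ c * ε)
    (f : H) (x xε : H)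
    (hx : ∀ y : H, ⟪A x, y - x⟫ + φ y - φ x ≥ ⟪f, y - x⟫)
    (hxε : ∀ y : H, ⟪A xε, y - xε⟫ + φε y - φε xε ≥ ⟪f, y - xε⟫) :
    ‖x - xε‖ ≤ Real.sqrt (2 * c * ε / C) := by
  have h1 := hx xε
  have h2 := hxε x
  have hkey : ⟪A x - A xε, x - xε⟫ ≤ c * ε := by
    have e1 : ⟪A x - A xε, x - xε⟫
        = -(⟪A x, xε - x⟫ + ⟪A xε, x - xε⟫) := by
      rw [inner_sub_left]
      have : (xε - x : H) = -(x - xε) := by abel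
      rw [this, inner_neg_right]
      ring
    have h3 := (happrox x).1
    have h4 := (happrox xε).2
    have hf : ⟪f, xε - x⟫ + ⟪f, x - xε⟫ = 0 := by
      have : (xε - x : H) = -(x - xε) := by abel
      rw [this, inner_neg_right]; ring
    rw [e1]
    nlinarith [h1, h2, h3, h4, hf]
  have hsq : ‖x - xε‖ ^ 2 ≤ 2 * c * ε / C := by
    have := hmono x xε
    have h5 : C * ‖x - xε‖ ^ 2 ≤ c * ε := le_trans this hkey
    rw [le_div_iff₀ hC]
    nlinarith [sq_nonneg ‖x - xε‖, mul_nonneg hc hε]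
  have : ‖x - xε‖ ≤ Real.sqrt (‖x - xε‖ ^ 2) := by
    rw [Real.sqrt_sq (norm_nonneg _)]
  exact this.trans (Real.sqrt_le_sqrt hsq)
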